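/- arXiv:1806.03031 — 6 statements merged into one kernel-verified Lean document; each statement's English description precedes it below -/
import Mathlib

section
/- For every c > 0, the double integral ∫₀¹∫₀¹ exp(−c·(u + v − u·v)) du dv equals (e^{−c}/c) · ∫₀^c (eᵗ − 1)/t dt. -/
/-!
The integrand is `exp (-c u) · exp (-c (1 - u) v)`, so the inner integral is elementary:
`(e^{-c u} - e^{-c}) / (c (1 - u))` for `u ≠ 1`. Factoring out `e^{-c}` leaves
`(e^t - 1) / t` at `t = c (1 - u)`, and the linear substitution `u ↦ c (1 - u)` maps `[0, 1]`
onto `[0, c]` with Jacobian `c`.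
-/

open Real intervalIntegral MeasureTheory

theorem integral_exp_mul_of_ne_zero {k : ℝ} (hk : k ≠ 0) (a b : ℝ) :
    ∫ x in a..b, exp (k * x) = (exp (k * b) - exp (k * a)) / k := by
  rw [integral_comp_mul_left (fun x => exp x) hk, integral_exp, smul_eq_mul, inv_mul_eq_div]

theorem integral_exp_neg_mul_add_sub_mul {c u : ℝ} (hc : c ≠ 0) (hu : u ≠ 1) :
    ∫ v in (0:ℝ)..1, exp (-c * (u + v - u * v)) =
      (exp (-c * u) - exp (-c)) / (c * (1 - u)) := by
  have hk : -c * (1 - u) ≠ 0 := mul_ne_zero (neg_ne_zero.mpr hc) (sub_ne_zero.mpr hu.symm)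
  have hsplit : ∀ v, exp (-c * (u + v - u * v)) = exp (-c * u) * exp (-c * (1 - u) * v) := by
    intro v
    rw [← exp_add]
    ring_nf
  simp_rw [hsplit]
  rw [intervalIntegral.integral_const_mul, integral_exp_mul_of_ne_zero hk, mul_zero, exp_zero,
    mul_one, mul_div_assoc', mul_sub, ← exp_add, mul_one, show -c * u + -c * (1 - u) = -c by ring,
    neg_mul c (1 - u), div_neg, ← neg_div, neg_sub]

theorem integral_comp_mul_one_sub {E : Type*} [NormedAddCommGroup E] [NormedSpace ℝ E]
    {c : ℝ} (hc : c ≠ 0) (f : ℝ → E) :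
    ∫ u in (0:ℝ)..1, f (c * (1 - u)) = c⁻¹ • ∫ t in (0:ℝ)..c, f t := by
  simpa [mul_sub] using integral_comp_sub_mul f hc c (a := 0) (b := 1)

/-- For every `c > 0`, the double integral
`∫₀¹∫₀¹ exp (−c (u + v − u v)) du dv` equals
`(e^{−c}/c) · ∫₀^c (eᵗ − 1)/t dt`. -/
theorem matern_retained_twice (c : ℝ) (hc : 0 < c) :
    (∫ u in (0:ℝ)..1, ∫ v in (0:ℝ)..1, Real.exp (-c * (u + v - u * v))) =
      (Real.exp (-c) / c) * ∫ t in (0:ℝ)..c, (Real.exp t - 1) / t := by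
  have hc0 : c ≠ 0 := hc.ne'
  have hinner : ∀ᵐ u ∂volume, u ∈ Set.uIoc 0 1 →
      ∫ v in (0:ℝ)..1, exp (-c * (u + v - u * v)) =
        exp (-c) * ((exp (c * (1 - u)) - 1) / (c * (1 - u))) := by
    filter_upwards [volume.ae_ne 1] with u hu _
    rw [integral_exp_neg_mul_add_sub_mul hc0 hu, mul_div_assoc']
    congr 1
    rw [mul_sub, ← exp_add, mul_one]
    ring_nf
  rw [integral_congr_ae hinner, intervalIntegral.integral_const_mul,
    integral_comp_mul_one_sub hc0 (fun t => (exp t - 1) / t), smul_eq_mul,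
    div_eq_mul_inv, mul_assoc]
end

section
/- For all real a ≥ 0 and c > 0, the double integral ∫₀¹∫₀¹ exp(−a·(u + v) − c·(u + v − u·v)) du dv equals (e^{−(a+c)²/c}/c) · ∫_a^{a+c} e^{(a+c)·t/c} · (1 − e^{−t})/t dt. -/
/-!
Integrating out `v` first: for fixed `u` the exponent is linear in `v` with slope
`-(a + c - c u)`, so the inner integral is `e^{-(a+c) u} (1 - e^{-t}) / t` with `t = a + c - c u`.
Writing `e^{-(a+c) u} = e^{-(a+c)²/c} e^{(a+c) t / c}` and substituting `t = a + c - c u`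
in the outer integral gives the right-hand side.
-/

open Real intervalIntegral MeasureTheory Set
open scoped Interval

theorem integral_exp_neg_mul_zero_one {β : ℝ} (hβ : β ≠ 0) :
    ∫ v in (0:ℝ)..1, exp (-β * v) = (1 - exp (-β)) / β := by
  rw [integral_comp_mul_left (fun x => exp x) (neg_ne_zero.mpr hβ), integral_exp]
  simp only [mul_one, mul_zero, exp_zero, smul_eq_mul]
  field_simp
  ring

theorem exp_neg_mul_eq_exp_mul_exp {K c : ℝ} (hc : c ≠ 0) (u : ℝ) :
    exp (-K * u) = exp (-K ^ 2 / c) * exp (K * (K - c * u) / c) := by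
  rw [← exp_add]
  congr 1
  field_simp
  ring

theorem integral_exp_thinning_inner {a c u : ℝ} (hc : c ≠ 0) (hu : a + c - c * u ≠ 0) :
    ∫ v in (0:ℝ)..1, exp (-a * (u + v) - c * (u + v - u * v)) =
      exp (-(a + c) ^ 2 / c) *
        (exp ((a + c) * (a + c - c * u) / c) * (1 - exp (-(a + c - c * u))) /
          (a + c - c * u)) := by
  have hsplit : ∀ v, exp (-a * (u + v) - c * (u + v - u * v)) =
      exp (-(a + c) * u) * exp (-(a + c - c * u) * v) := fun v => by
    rw [← exp_add]; ring_nf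
  simp_rw [hsplit]
  rw [intervalIntegral.integral_const_mul, integral_exp_neg_mul_zero_one hu,
    exp_neg_mul_eq_exp_mul_exp hc]
  ring

theorem matern_two_points_two_thinnings_general (a c : ℝ) (hc : 0 < c) :
    (∫ u in (0:ℝ)..1, ∫ v in (0:ℝ)..1,
        Real.exp (-a * (u + v) - c * (u + v - u * v))) =
      (Real.exp (-(a + c) ^ 2 / c) / c) *
        ∫ t in a..(a + c), Real.exp ((a + c) * t / c) * (1 - Real.exp (-t)) / t := by
  set g : ℝ → ℝ := fun t => exp ((a + c) * t / c) * (1 - exp (-t)) / t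
  have hinner : ∀ᵐ u : ℝ, u ∈ Ι (0:ℝ) 1 →
      (∫ v in (0:ℝ)..1, exp (-a * (u + v) - c * (u + v - u * v))) =
        exp (-(a + c) ^ 2 / c) * g (a + c - c * u) := by
    filter_upwards [volume.ae_ne ((a + c) / c)] with u hu _
    refine integral_exp_thinning_inner hc.ne' fun h => hu ?_
    field_simp
    linarith
  rw [integral_congr_ae hinner, intervalIntegral.integral_const_mul,
    integral_comp_sub_mul g hc.ne', smul_eq_mul]
  ring_nf

/-- For `a ≥ 0` and `c > 0`,
`∫₀¹∫₀¹ exp (−a (u + v) − c (u + v − u v)) du dv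
  = (e^{−(a+c)²/c}/c) · ∫_a^{a+c} e^{(a+c) t/c} (1 − e^{−t})/t dt`. -/
theorem matern_two_points_two_thinnings (a c : ℝ) (ha : 0 ≤ a) (hc : 0 < c) :
    (∫ u in (0:ℝ)..1, ∫ v in (0:ℝ)..1,
        Real.exp (-a * (u + v) - c * (u + v - u * v))) =
      (Real.exp (-(a + c) ^ 2 / c) / c) *
        ∫ t in a..(a + c), Real.exp ((a + c) * t / c) * (1 - Real.exp (-t)) / t :=
  matern_two_points_two_thinnings_general a c hc
end

section
/- For every c > 0, the double integral ∫₀¹∫₀¹ (1 − u)·(1 − v)·exp(−c·(u + v − u·v)) du dv equals (1 − e^{−c}·(1 + ∫₀^c (eᵗ − 1)/t dt)) / c². -/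
/-!
Substituting `u = 1 - x`, `v = 1 - y` turns the exponent `-c (u + v - u v)` into `-c + c x y`,
so the integral is `e^{-c} ∫₀¹∫₀¹ x y e^{c x y}`. The inner integral is elementary,
`(e^{cx} - (e^{cx} - 1) / (c x)) / c`, and the substitution `t = c x` in the outer one
produces `∫₀^c (eᵗ - 1) / t dt`.
-/

open Real intervalIntegral

open MeasureTheory in
theorem intervalIntegrable_exp_sub_one_div (a b : ℝ) :
    IntervalIntegrable (fun t => (exp t - 1) / t) volume a b := by
  have hcont : Continuous (dslope exp 0) :=
    continuousOn_univ.1 <|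
      (continuousOn_dslope Filter.univ_mem).2 ⟨continuous_exp.continuousOn, differentiableAt_exp⟩
  refine (hcont.intervalIntegrable a b).congr_ae (ae_restrict_of_ae ?_)
  filter_upwards [volume.ae_ne 0] with t ht
  rw [dslope_of_ne _ ht, slope_def_field, exp_zero, sub_zero]

theorem integral_comp_one_sub {E : Type*} [NormedAddCommGroup E] [NormedSpace ℝ E] (f : ℝ → E) :
    ∫ x in (0:ℝ)..1, f (1 - x) = ∫ x in (0:ℝ)..1, f x := by
  simp [integral_comp_sub_left f (1 : ℝ) (a := 0) (b := 1)]

theorem integral_mul_exp_mul {b : ℝ} (hb : b ≠ 0) :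
    ∫ y in (0:ℝ)..1, y * exp (b * y) = (exp b - (exp b - 1) / b) / b := by
  have hderiv : ∀ y ∈ Set.uIcc (0:ℝ) 1,
      HasDerivAt (fun y => exp (b * y) * (y / b - 1 / b ^ 2)) (y * exp (b * y)) y := by
    intro y _
    refine ((((hasDerivAt_id y).const_mul b).exp).mul
      (((hasDerivAt_id y).div_const b).sub_const (1 / b ^ 2))).congr_deriv ?_
    simp only [id]
    field_simp
    ring
  rw [integral_eq_sub_of_hasDerivAt hderiv (by apply Continuous.intervalIntegrable; fun_prop)]
  simp only [mul_zero, mul_one, exp_zero]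
  field_simp
  ring

theorem integral_integral_mul_mul_exp_mul {c : ℝ} (hc : c ≠ 0) :
    ∫ x in (0:ℝ)..1, ∫ y in (0:ℝ)..1, x * y * exp (c * x * y) =
      (exp c - 1 - ∫ t in (0:ℝ)..c, (exp t - 1) / t) / c ^ 2 := by
  calc ∫ x in (0:ℝ)..1, ∫ y in (0:ℝ)..1, x * y * exp (c * x * y)
      = ∫ x in (0:ℝ)..1, (exp (c * x) - (exp (c * x) - 1) / (c * x)) / c := by
        refine integral_congr_ae (Filter.Eventually.of_forall fun x hx => ?_)
        have hx : x ≠ 0 := (Set.uIoc_of_le (zero_le_one' ℝ) ▸ hx).1.ne'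
        simp_rw [mul_assoc x, integral_const_mul, integral_mul_exp_mul (mul_ne_zero hc hx)]
        field_simp
    _ = (∫ t in (0:ℝ)..c, exp t - (exp t - 1) / t) / c ^ 2 := by
        rw [integral_div, integral_comp_mul_left (fun t => exp t - (exp t - 1) / t) hc,
          mul_zero, mul_one, smul_eq_mul]
        field_simp
    _ = (exp c - 1 - ∫ t in (0:ℝ)..c, (exp t - 1) / t) / c ^ 2 := by
        rw [integral_sub (by apply Continuous.intervalIntegrable; fun_prop)
          (intervalIntegrable_exp_sub_one_div 0 c), integral_exp, exp_zero]

/-- For every `c > 0`,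
`∫₀¹∫₀¹ (1 − u)(1 − v) exp (−c (u + v − u v)) du dv
  = (1 − e^{−c} (1 + ∫₀^c (eᵗ − 1)/t dt)) / c²`. -/
theorem matern_close_points_limit (c : ℝ) (hc : 0 < c) :
    (∫ u in (0:ℝ)..1, ∫ v in (0:ℝ)..1,
        (1 - u) * (1 - v) * Real.exp (-c * (u + v - u * v))) =
      (1 - Real.exp (-c) * (1 + ∫ t in (0:ℝ)..c, (Real.exp t - 1) / t)) / c ^ 2 := by
  have hreflect : ∀ x y : ℝ, (1 - (1 - x)) * (1 - (1 - y)) *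
      exp (-c * ((1 - x) + (1 - y) - (1 - x) * (1 - y))) = exp (-c) * (x * y * exp (c * x * y)) := by
    intro x y
    rw [show -c * ((1 - x) + (1 - y) - (1 - x) * (1 - y)) = -c + c * x * y by ring, exp_add]
    ring
  calc _ = ∫ x in (0:ℝ)..1, ∫ y in (0:ℝ)..1, exp (-c) * (x * y * exp (c * x * y)) := by
        rw [← integral_comp_one_sub]
        congr 1 with x
        rw [← integral_comp_one_sub]
        simp_rw [hreflect]
    _ = exp (-c) * ((exp c - 1 - ∫ t in (0:ℝ)..c, (exp t - 1) / t) / c ^ 2) := by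
        simp_rw [integral_const_mul, integral_integral_mul_mul_exp_mul hc.ne']
    _ = _ := by
        rw [exp_neg]
        field_simp
        ring
end

section
/- Let d > 0 and let x, y be points in the Euclidean plane with r := dist(x, y) satisfying 0 ≤ r ≤ 2d. Then the Lebesgue measure (area) of the intersection of the open (equivalently closed) balls of radius d centered at x and at y equals 2d²·arccos(r/(2d)) − (r/2)·√(4d² − r²). -/
/-!
A reflection followed by a translation moves the two centres to `(0, -r/2)` and `(0, r/2)`,
where `r` is their distance. The slice of the lens at abscissa `b` is then the interval
`|t| < √(d² - b²) - r/2`, nonempty exactly for `|b| < k := √(d² - r²/4)`, so the area is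
`∫_{-k}^{k} (2√(d² - b²) - r) db`; the primitive `(t √(d² - t²) + d² arcsin (t/d)) / 2` of
`√(d² - t²)` evaluates it, and `arcsin (k/d) = arccos (r/(2d))`.
-/

open MeasureTheory Metric Real Set

theorem volume_ball_inter_ball_eq_of_dist_eq {E : Type*} [NormedAddCommGroup E]
    [InnerProductSpace ℝ E] [FiniteDimensional ℝ E] [MeasurableSpace E] [BorelSpace E]
    {x y x' y' : E} (hxy : dist x y = dist x' y') (d₁ d₂ : ℝ) :
    volume (ball x d₁ ∩ ball y d₂) = volume (ball x' d₁ ∩ ball y' d₂) := by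
  set R := Submodule.reflection (ℝ ∙ ((y - x) - (y' - x')))ᗮ
  have hR : R (y - x) = y' - x' :=
    Submodule.reflection_sub (by rwa [← dist_eq_norm', ← dist_eq_norm'])
  have hφ : MeasurePreserving (fun p => R (p - x) + x') :=
    (measurePreserving_add_right volume x').comp
      (R.measurePreserving.comp (measurePreserving_sub_right volume x))
  have hpre : (fun p => R (p - x) + x') ⁻¹' (ball x' d₁ ∩ ball y' d₂) =
      ball x d₁ ∩ ball y d₂ := by
    ext p
    have hy : R (p - x) + x' - y' = R (p - y) := by
      rw [add_sub_assoc, ← neg_sub y' x', ← hR, ← sub_eq_add_neg, ← map_sub,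
        sub_sub_sub_cancel_right]
    simp only [mem_preimage, mem_inter_iff, mem_ball, dist_eq_norm, add_sub_cancel_right, hy,
      LinearIsometryEquiv.norm_map]
  rw [← hpre, hφ.measure_preimage (measurableSet_ball.inter measurableSet_ball).nullMeasurableSet]

theorem sqrt_one_sub_div_sq {d : ℝ} (hd : 0 < d) (t : ℝ) :
    √(1 - (t / d) ^ 2) = √(d ^ 2 - t ^ 2) / d := by
  rw [show 1 - (t / d) ^ 2 = (d ^ 2 - t ^ 2) / d ^ 2 by field_simp, sqrt_div' _ (sq_nonneg d),
    sqrt_sq hd.le]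

theorem hasDerivAt_sqrt_sq_sub_sq_primitive {d t : ℝ} (hd : 0 < d) (ht : t ∈ Ioo (-d) d) :
    HasDerivAt (fun t => (t * √(d ^ 2 - t ^ 2) + d ^ 2 * arcsin (t / d)) / 2)
      (√(d ^ 2 - t ^ 2)) t := by
  obtain ⟨ht₁, ht₂⟩ := ht
  have hpos : 0 < d ^ 2 - t ^ 2 := by nlinarith
  have hsqrt : HasDerivAt (fun t => √(d ^ 2 - t ^ 2))
      (-(2 * t) / (2 * √(d ^ 2 - t ^ 2))) t := by
    simpa using ((hasDerivAt_pow 2 t).const_sub (d ^ 2)).sqrt hpos.ne'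
  have harcsin : HasDerivAt (fun t => arcsin (t / d)) (1 / √(1 - (t / d) ^ 2) * (1 / d)) t :=
    (hasDerivAt_arcsin (by rw [ne_eq, div_eq_iff hd.ne']; linarith)
      (by rw [ne_eq, div_eq_iff hd.ne']; linarith)).comp t ((hasDerivAt_id' t).div_const d)
  refine (((hasDerivAt_id' t).mul hsqrt).add (harcsin.const_mul (d ^ 2))).div_const 2
    |>.congr_deriv ?_
  have hsq : √(d ^ 2 - t ^ 2) ^ 2 = d ^ 2 - t ^ 2 := sq_sqrt hpos.le
  rw [sqrt_one_sub_div_sq hd]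
  field_simp
  linear_combination -hsq

theorem integral_sqrt_sq_sub_sq {d a b : ℝ} (hd : 0 < d) (ha : -d ≤ a) (hab : a ≤ b)
    (hb : b ≤ d) :
    ∫ t in a..b, √(d ^ 2 - t ^ 2) =
      (b * √(d ^ 2 - b ^ 2) + d ^ 2 * arcsin (b / d)) / 2
        - (a * √(d ^ 2 - a ^ 2) + d ^ 2 * arcsin (a / d)) / 2 :=
  intervalIntegral.integral_eq_sub_of_hasDerivAt_of_le hab (by fun_prop)
    (fun t ht => hasDerivAt_sqrt_sq_sub_sq_primitive hd ⟨ha.trans_lt ht.1, ht.2.trans_le hb⟩)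
    ((by fun_prop : Continuous fun t : ℝ => √(d ^ 2 - t ^ 2)).intervalIntegrable a b)

def planeLens (d h : ℝ) : Set (ℝ × ℝ) :=
  {p | p.1 ^ 2 + (p.2 + h) ^ 2 < d ^ 2 ∧ p.1 ^ 2 + (p.2 - h) ^ 2 < d ^ 2}

theorem mem_planeLens_iff {d h : ℝ} (hh : 0 ≤ h) {p : ℝ × ℝ} :
    p ∈ planeLens d h ↔ |p.2| + h < √(d ^ 2 - p.1 ^ 2) := by
  rw [lt_sqrt (by positivity), lt_sub_iff_add_lt']
  constructor
  · rintro ⟨hplus, hminus⟩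
    rcases abs_cases p.2 with ⟨habs, _⟩ | ⟨habs, _⟩ <;> rw [habs]
    · exact hplus
    · linarith
  · intro hlt
    constructor <;> nlinarith [abs_nonneg p.2, neg_abs_le p.2, le_abs_self p.2]

theorem planeLens_eq_regionBetween {d h : ℝ} (hh : 0 ≤ h) :
    planeLens d h =
      regionBetween (fun b => h - √(d ^ 2 - b ^ 2)) (fun b => √(d ^ 2 - b ^ 2) - h)
        (Ioo (-√(d ^ 2 - h ^ 2)) √(d ^ 2 - h ^ 2)) := by
  ext ⟨b, t⟩
  rw [mem_planeLens_iff hh]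
  change _ ↔ b ∈ Ioo _ _ ∧ h - √(d ^ 2 - b ^ 2) < t ∧ t < √(d ^ 2 - b ^ 2) - h
  rw [← neg_sub (√(d ^ 2 - b ^ 2)) h, mem_Ioo, ← abs_lt, ← abs_lt,
    lt_sub_iff_add_lt, lt_sqrt (abs_nonneg b), sq_abs, lt_sub_comm]
  refine ⟨fun hlt => ⟨?_, hlt⟩, And.right⟩
  have : h < √(d ^ 2 - b ^ 2) := by linarith [abs_nonneg t]
  rwa [lt_sqrt hh] at this

theorem volume_planeLens {d h : ℝ} (hd : 0 < d) (hh : 0 ≤ h) (hhd : h ≤ d) :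
    volume (planeLens d h) =
      ENNReal.ofReal (2 * d ^ 2 * arccos (h / d) - 2 * h * √(d ^ 2 - h ^ 2)) := by
  rw [planeLens_eq_regionBetween hh, Measure.volume_eq_prod]
  set k := √(d ^ 2 - h ^ 2)
  have hk : k ^ 2 = d ^ 2 - h ^ 2 := sq_sqrt (by nlinarith)
  have hk₀ : 0 ≤ k := sqrt_nonneg _
  have hkd : k ≤ d := by nlinarith
  have hle : ∀ b ∈ Ioo (-k) k, h - √(d ^ 2 - b ^ 2) ≤ √(d ^ 2 - b ^ 2) - h := by
    intro b ⟨hb₁, hb₂⟩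
    have : h ≤ √(d ^ 2 - b ^ 2) := (le_sqrt hh (by nlinarith)).mpr (by nlinarith)
    linarith
  have hint : ∀ f : ℝ → ℝ, Continuous f → IntegrableOn f (Ioo (-k) k) :=
    fun f hf => hf.integrableOn_Icc.mono_set Ioo_subset_Icc_self
  rw [volume_regionBetween_eq_integral (hint (fun b => h - √(d ^ 2 - b ^ 2)) (by fun_prop))
    (hint (fun b => √(d ^ 2 - b ^ 2) - h) (by fun_prop)) measurableSet_Ioo hle]
  congr 1
  calc ∫ b in Ioo (-k) k, ((fun b => √(d ^ 2 - b ^ 2) - h) - fun b => h - √(d ^ 2 - b ^ 2)) b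
      = ∫ b in -k..k, (2 * √(d ^ 2 - b ^ 2) - 2 * h) := by
        rw [intervalIntegral.integral_of_le (by linarith), integral_Ioc_eq_integral_Ioo]
        congr 1 with b
        simp only [Pi.sub_apply]
        ring
    _ = 2 * (∫ b in -k..k, √(d ^ 2 - b ^ 2)) - 4 * k * h := by
        rw [intervalIntegral.integral_sub
          ((by fun_prop : Continuous fun b : ℝ => 2 * √(d ^ 2 - b ^ 2)).intervalIntegrable _ _)
          intervalIntegrable_const, intervalIntegral.integral_const_mul,
          intervalIntegral.integral_const, smul_eq_mul]
        ring
    _ = 2 * d ^ 2 * arcsin (k / d) - 2 * h * k := by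
        rw [integral_sqrt_sq_sub_sq hd (by linarith) (by linarith) hkd, neg_sq, neg_div,
          arcsin_neg, show d ^ 2 - k ^ 2 = h ^ 2 by linarith, sqrt_sq hh]
        ring
    _ = 2 * d ^ 2 * arccos (h / d) - 2 * h * k := by
        rw [arccos_eq_arcsin (div_nonneg hh hd.le), sqrt_one_sub_div_sq hd]

theorem volume_ball_inter_ball_eq_volume_planeLens {d : ℝ} (hd : 0 < d) (h : ℝ) :
    volume (ball !₂[0, -h] d ∩ ball !₂[0, h] d) = volume (planeLens d h) := by
  have he : MeasurePreserving
      ((MeasurableEquiv.toLp 2 (Fin 2 → ℝ)).symm.trans MeasurableEquiv.finTwoArrow) :=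
    (volume_preserving_finTwoArrow ℝ).comp
      (EuclideanSpace.volume_preserving_symm_measurableEquiv_toLp (Fin 2))
  rw [← he.measure_preimage_equiv]
  congr 1
  ext p
  simp [planeLens, EuclideanSpace.dist_eq, sqrt_lt' hd, Fin.sum_univ_two, Real.dist_eq, sq_abs]

/-- The area of the intersection of two discs of radius `d` in the Euclidean
plane whose centers are at distance `r ≤ 2d` equals
`2 d² arccos (r/(2d)) − (r/2) √(4d² − r²)`. -/
theorem area_inter_balls (d : ℝ) (hd : 0 < d) (x y : EuclideanSpace ℝ (Fin 2))
    (hr : dist x y ≤ 2 * d) :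
    volume (ball x d ∩ ball y d) =
      ENNReal.ofReal (2 * d ^ 2 * Real.arccos (dist x y / (2 * d))
        - (dist x y / 2) * Real.sqrt (4 * d ^ 2 - dist x y ^ 2)) := by
  set r := dist x y
  have hr₀ : 0 ≤ r := dist_nonneg
  have hdist : r = dist (!₂[0, -(r / 2)] : EuclideanSpace ℝ (Fin 2)) !₂[0, r / 2] := by
    simp only [EuclideanSpace.dist_eq, Fin.sum_univ_two, Real.dist_eq, sq_abs,
      Matrix.cons_val_zero, Matrix.cons_val_one, sub_self]
    rw [show -(r / 2) - r / 2 = -r by ring, neg_sq, zero_pow two_ne_zero, zero_add, sqrt_sq hr₀]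
  rw [volume_ball_inter_ball_eq_of_dist_eq hdist, volume_ball_inter_ball_eq_volume_planeLens hd,
    volume_planeLens hd (by positivity) (by linarith), div_div,
    show 4 * d ^ 2 - r ^ 2 = 2 ^ 2 * (d ^ 2 - (r / 2) ^ 2) by ring,
    sqrt_mul' _ (by nlinarith), sqrt_sq zero_le_two]
  ring_nf
end

section
/- Let r > 0 and let F : ℝ² → [0, ∞] be measurable. Then ∫_{ℝ²} F(x) dx = ∫₀^∞ ∫₀^{2π} F( (r·cosh μ·cos ν, r·sinh μ·sin ν) ) · (r²/2)·(cosh 2μ − cos 2ν) dν dμ, where the left-hand side is the Lebesgue integral over the plane. -/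
open MeasureTheory Real

namespace EllipticAux

noncomputable def ell (r : ℝ) (p : ℝ × ℝ) : ℝ × ℝ :=
  (r * Real.cosh p.1 * Real.cos p.2, r * Real.sinh p.1 * Real.sin p.2)

def S : Set (ℝ × ℝ) := Set.Ioi (0:ℝ) ×ˢ Set.Ioo (0:ℝ) (2 * π)

noncomputable def B (r : ℝ) (p : ℝ × ℝ) : ℝ × ℝ →L[ℝ] ℝ × ℝ :=
  LinearMap.toContinuousLinearMap (Matrix.toLin (Module.Basis.finTwoProd ℝ) (Module.Basis.finTwoProd ℝ)
    !![r * Real.sinh p.1 * Real.cos p.2, -(r * Real.cosh p.1 * Real.sin p.2);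
       r * Real.cosh p.1 * Real.sin p.2, r * Real.sinh p.1 * Real.cos p.2])

lemma hasFDerivAt_ell (r : ℝ) (p : ℝ × ℝ) : HasFDerivAt (ell r) (B r p) p := by
  unfold ell B
  rw [Matrix.toLin_finTwoProd_toContinuousLinearMap]
  convert HasFDerivAt.prodMk (𝕜 := ℝ)
    ((((Real.hasDerivAt_cosh p.1).comp_hasFDerivAt p hasFDerivAt_fst).const_mul r).mul
      ((Real.hasDerivAt_cos p.2).comp_hasFDerivAt p hasFDerivAt_snd))
    ((((Real.hasDerivAt_sinh p.1).comp_hasFDerivAt p hasFDerivAt_fst).const_mul r).mul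
      ((Real.hasDerivAt_sin p.2).comp_hasFDerivAt p hasFDerivAt_snd)) using 2 <;>
  · ext q <;>
      simp [smul_smul, mul_comm, mul_assoc, mul_left_comm]

lemma det_B (r : ℝ) (p : ℝ × ℝ) :
    (B r p).det = r ^ 2 / 2 * (Real.cosh (2 * p.1) - Real.cos (2 * p.2)) := by
  simp only [B, LinearMap.det_toContinuousLinearMap, LinearMap.det_toLin,
    Matrix.det_fin_two_of]
  rw [Real.cosh_two_mul, Real.cos_two_mul']
  linear_combination (r ^ 2 * (Real.sin p.2 ^ 2 - 1 / 2)) * Real.cosh_sq_sub_sinh_sq p.1 +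
    (r ^ 2 * (Real.sinh p.1 ^ 2 + 1 / 2)) * Real.sin_sq_add_cos_sq p.2

lemma injOn (r : ℝ) (hr : 0 < r) : Set.InjOn (ell r) S := by
  rintro ⟨μ₁, ν₁⟩ ⟨hμ₁, hν₁⟩ ⟨μ₂, ν₂⟩ ⟨hμ₂, hν₂⟩ h
  simp only [Set.mem_Ioi, Set.mem_Ioo] at hμ₁ hν₁ hμ₂ hν₂
  simp only [ell, Prod.mk.injEq] at h
  obtain ⟨h1, h2⟩ := h
  have e1 : Real.cosh μ₁ * Real.cos ν₁ = Real.cosh μ₂ * Real.cos ν₂ :=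
    mul_left_cancel₀ hr.ne' (by rw [← mul_assoc, ← mul_assoc]; exact h1)
  have e2 : Real.sinh μ₁ * Real.sin ν₁ = Real.sinh μ₂ * Real.sin ν₂ :=
    mul_left_cancel₀ hr.ne' (by rw [← mul_assoc, ← mul_assoc]; exact h2)
  have hs1 : 0 < Real.sinh μ₁ := by rwa [Real.sinh_pos_iff]
  have hs2 : 0 < Real.sinh μ₂ := by rwa [Real.sinh_pos_iff]
  have hc1 : 1 < Real.cosh μ₁ := Real.one_lt_cosh.2 (ne_of_gt hμ₁)
  have hc2 : 1 < Real.cosh μ₂ := Real.one_lt_cosh.2 (ne_of_gt hμ₂)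
  have hq1 := Real.cosh_sq_sub_sinh_sq μ₁
  have hq2 := Real.cosh_sq_sub_sinh_sq μ₂
  have ht1 := Real.sin_sq_add_cos_sq ν₁
  have ht2 := Real.sin_sq_add_cos_sq ν₂
  have e1sq : (Real.cosh μ₁ * Real.cos ν₁) ^ 2 = (Real.cosh μ₂ * Real.cos ν₂) ^ 2 := by
    rw [e1]
  have e2sq : (Real.sinh μ₁ * Real.sin ν₁) ^ 2 = (Real.sinh μ₂ * Real.sin ν₂) ^ 2 := by
    rw [e2]
  have E1 : Real.cosh μ₁ ^ 2 * (1 - Real.sin ν₁ ^ 2)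
      = Real.cosh μ₂ ^ 2 * (1 - Real.sin ν₂ ^ 2) := by
    linear_combination e1sq - Real.cosh μ₁ ^ 2 * ht1 + Real.cosh μ₂ ^ 2 * ht2
  have E2 : (Real.cosh μ₁ ^ 2 - 1) * Real.sin ν₁ ^ 2
      = (Real.cosh μ₂ ^ 2 - 1) * Real.sin ν₂ ^ 2 := by
    linear_combination e2sq + Real.sin ν₁ ^ 2 * hq1 - Real.sin ν₂ ^ 2 * hq2
  have hsum : Real.cosh μ₁ ^ 2 - Real.sin ν₁ ^ 2
      = Real.cosh μ₂ ^ 2 - Real.sin ν₂ ^ 2 := by linear_combination E1 + E2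
  have key : (Real.cosh μ₁ ^ 2 - Real.cosh μ₂ ^ 2)
      * (Real.cosh μ₁ ^ 2 + Real.sin ν₂ ^ 2 - 1) = 0 := by
    linear_combination (Real.cosh μ₁ ^ 2 - 1) * hsum + E2
  have ha : Real.cosh μ₁ ^ 2 = Real.cosh μ₂ ^ 2 := by
    rcases mul_eq_zero.1 key with h | h
    · linarith
    · exfalso; nlinarith [sq_nonneg (Real.sin ν₂), hc1]
  have hsinh : Real.sinh μ₁ = Real.sinh μ₂ := by
    have hsq : Real.sinh μ₁ ^ 2 = Real.sinh μ₂ ^ 2 := by linarith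
    have h' := congrArg Real.sqrt hsq
    rwa [Real.sqrt_sq hs1.le, Real.sqrt_sq hs2.le] at h'
  have hμ : μ₁ = μ₂ := Real.sinh_injective hsinh
  subst hμ
  have hcos : Real.cos ν₁ = Real.cos ν₂ :=
    mul_left_cancel₀ (Real.cosh_pos μ₁).ne' e1
  have hsin : Real.sin ν₁ = Real.sin ν₂ := mul_left_cancel₀ hs1.ne' e2
  have hone : Real.cos (ν₁ - ν₂) = 1 := by
    rw [Real.cos_sub, hcos, hsin]; linarith [Real.sin_sq_add_cos_sq ν₂]
  have hν : ν₁ = ν₂ := by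
    have := (Real.cos_eq_one_iff_of_lt_of_lt (x := ν₁ - ν₂)
      (by linarith [hν₁.1, hν₁.2, hν₂.1, hν₂.2])
      (by linarith [hν₁.1, hν₁.2, hν₂.1, hν₂.2])).1 hone
    linarith
  simp [hν]

lemma exists_angle {c s : ℝ} (h : c ^ 2 + s ^ 2 = 1) (hs : s ≠ 0) :
    ∃ ν ∈ Set.Ioo (0:ℝ) (2 * π), Real.cos ν = c ∧ Real.sin ν = s := by
  have hc1 : -1 ≤ c := by nlinarith
  have hc2 : c ≤ 1 := by nlinarith
  have hsqrt : Real.sqrt (1 - c ^ 2) = |s| := by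
    rw [show (1 : ℝ) - c ^ 2 = s ^ 2 by linarith, Real.sqrt_sq_eq_abs]
  rcases lt_or_gt_of_ne hs with hneg | hpos
  · refine ⟨2 * π - Real.arccos c, ⟨?_, ?_⟩, ?_, ?_⟩
    · have := Real.arccos_le_pi c
      linarith [Real.pi_pos]
    · have h0 : 0 < Real.arccos c := Real.arccos_pos.2 (by nlinarith)
      linarith
    · rw [Real.cos_sub, Real.cos_two_pi, Real.sin_two_pi,
        Real.cos_arccos hc1 hc2]; ring
    · rw [Real.sin_sub, Real.cos_two_pi, Real.sin_two_pi, Real.sin_arccos, hsqrt,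
        abs_of_neg hneg]; ring
  · refine ⟨Real.arccos c, ⟨?_, ?_⟩, Real.cos_arccos hc1 hc2, ?_⟩
    · exact Real.arccos_pos.2 (by nlinarith)
    · have := Real.arccos_le_pi c
      linarith [Real.pi_pos]
    · rw [Real.sin_arccos, hsqrt, abs_of_pos hpos]

lemma mem_image (r : ℝ) (hr : 0 < r) {x y : ℝ} (hy : y ≠ 0) :
    ((x, y) : ℝ × ℝ) ∈ ell r '' S := by
  obtain ⟨q, hq⟩ : ∃ q : ℝ, q = (x / r) ^ 2 := ⟨_, rfl⟩
  obtain ⟨p, hp⟩ : ∃ p : ℝ, p = q + (y / r) ^ 2 := ⟨_, rfl⟩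
  have hyr : 0 < (y / r) ^ 2 := by positivity
  have hpq : q < p := by rw [hp]; linarith
  have hq0 : 0 ≤ q := hq ▸ sq_nonneg _
  have hD0 : (0:ℝ) ≤ (p + 1) ^ 2 - 4 * q := by nlinarith [sq_nonneg (q - 1)]
  obtain ⟨s, hsdef⟩ : ∃ s : ℝ, s = Real.sqrt ((p + 1) ^ 2 - 4 * q) := ⟨_, rfl⟩
  have hs2 : s ^ 2 = (p + 1) ^ 2 - 4 * q := by rw [hsdef]; exact Real.sq_sqrt hD0
  have hs0 : 0 ≤ s := hsdef ▸ Real.sqrt_nonneg _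
  obtain ⟨a, ha⟩ : ∃ a : ℝ, a = ((p + 1) + s) / 2 := ⟨_, rfl⟩
  have ha1 : 1 < a := by
    have hlt : |1 - p| < s := by
      have hxx : (1 - p) ^ 2 < (p + 1) ^ 2 - 4 * q := by nlinarith
      rw [hsdef]
      calc |1 - p| = Real.sqrt ((1 - p) ^ 2) := (Real.sqrt_sq_eq_abs _).symm
        _ < _ := Real.sqrt_lt_sqrt (sq_nonneg _) hxx
    have h1 := le_abs_self (1 - p)
    rw [ha]; linarith
  have ha0 : 0 < a := by linarith
  have haq : a ^ 2 - (p + 1) * a + q = 0 := by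
    rw [ha]; linear_combination hs2 / 4
  obtain ⟨μ₀, hμdef⟩ : ∃ m : ℝ, m = Real.arsinh (Real.sqrt (a - 1)) := ⟨_, rfl⟩
  have hsq_pos : 0 < Real.sqrt (a - 1) := Real.sqrt_pos.2 (by linarith)
  have hμ0 : 0 < μ₀ := by rw [hμdef]; exact Real.arsinh_pos_iff.2 hsq_pos
  have hsinh : Real.sinh μ₀ = Real.sqrt (a - 1) := by rw [hμdef]; exact Real.sinh_arsinh _
  have hcosh : Real.cosh μ₀ = Real.sqrt a := by
    rw [hμdef, Real.cosh_arsinh, Real.sq_sqrt (by linarith : (0:ℝ) ≤ a - 1),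
      show 1 + (a - 1) = a by ring]
  have hca : Real.cosh μ₀ ^ 2 = a := by
    rw [hcosh, Real.sq_sqrt ha0.le]
  have hsa : Real.sinh μ₀ ^ 2 = a - 1 := by
    rw [hsinh, Real.sq_sqrt (by linarith : (0:ℝ) ≤ a - 1)]
  have hcosh0 : 0 < Real.cosh μ₀ := Real.cosh_pos μ₀
  have hsinh0 : 0 < Real.sinh μ₀ := by rw [hsinh]; exact hsq_pos
  have hx2 : x ^ 2 = q * r ^ 2 := by
    rw [hq, div_pow]; field_simp
  have hy2 : y ^ 2 = (p - q) * r ^ 2 := by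
    rw [hp]; field_simp; ring
  have h1 : r ^ 2 * a ≠ 0 := by positivity
  have h2 : r ^ 2 * (a - 1) ≠ 0 := by
    have h' : (0:ℝ) < a - 1 := by linarith
    positivity
  have key2 : x ^ 2 * (r ^ 2 * (a - 1)) + (r ^ 2 * a) * y ^ 2
      = (r ^ 2 * a) * (r ^ 2 * (a - 1)) := by
    linear_combination (r ^ 2 * (a - 1)) * hx2 + (r ^ 2 * a) * hy2 - r ^ 4 * haq
  have hident : (x / (r * Real.cosh μ₀)) ^ 2 + (y / (r * Real.sinh μ₀)) ^ 2 = 1 := by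
    rw [div_pow, div_pow, mul_pow, mul_pow, hca, hsa, div_add_div _ _ h1 h2,
      div_eq_one_iff_eq (mul_ne_zero h1 h2)]
    linear_combination key2
  have hsv : y / (r * Real.sinh μ₀) ≠ 0 :=
    div_ne_zero hy (mul_pos hr hsinh0).ne'
  obtain ⟨ν, hν, hcosν, hsinν⟩ := exists_angle hident hsv
  refine ⟨(μ₀, ν), ⟨hμ0, hν⟩, ?_⟩
  simp only [ell]
  rw [hcosν, hsinν]
  rw [mul_div_cancel₀ _ (mul_pos hr hcosh0).ne', mul_div_cancel₀ _ (mul_pos hr hsinh0).ne']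

lemma continuous_ell (r : ℝ) : Continuous (ell r) := by
  unfold ell; fun_prop

lemma det_nonneg (r : ℝ) (p : ℝ × ℝ) :
    0 ≤ r ^ 2 / 2 * (Real.cosh (2 * p.1) - Real.cos (2 * p.2)) := by
  have h1 := Real.one_le_cosh (2 * p.1)
  have h2 := Real.cos_le_one (2 * p.2)
  have : (0:ℝ) ≤ r ^ 2 / 2 := by positivity
  nlinarith

end EllipticAux

open EllipticAux in
/-- Change of variables into elliptic coordinates with focal distance `r`:
for measurable `F : ℝ² → [0,∞]`,
`∫_{ℝ²} F = ∫₀^∞ ∫₀^{2π} F (r cosh μ cos ν, r sinh μ sin ν) (r²/2)(cosh 2μ − cos 2ν) dν dμ`. -/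
theorem lintegral_elliptic_coordinates (r : ℝ) (hr : 0 < r)
    (F : ℝ × ℝ → ENNReal) (hF : Measurable F) :
    ∫⁻ x, F x =
      ∫⁻ μ in Set.Ioi (0:ℝ), ∫⁻ ν in Set.Ioo (0:ℝ) (2 * π),
        F (r * Real.cosh μ * Real.cos ν, r * Real.sinh μ * Real.sin ν) *
          ENNReal.ofReal (r ^ 2 / 2 * (Real.cosh (2 * μ) - Real.cos (2 * ν))) := by
  have hS : MeasurableSet S := measurableSet_Ioi.prod measurableSet_Ioo
  have himg : ell r '' S =ᵐ[volume] Set.univ := by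
    have A : (ell r '' S)ᶜ ⊆ (LinearMap.ker (LinearMap.snd ℝ ℝ ℝ) : Set (ℝ × ℝ)) := by
      rintro ⟨x, y⟩ hxy
      simp only [SetLike.mem_coe, LinearMap.mem_ker, LinearMap.snd_apply]
      by_contra hy
      exact hxy (mem_image r hr hy)
    have B0 : volume (LinearMap.ker (LinearMap.snd ℝ ℝ ℝ) : Set (ℝ × ℝ)) = 0 := by
      apply Measure.addHaar_submodule
      rw [Ne, LinearMap.ker_eq_top]
      intro h
      have : (LinearMap.snd ℝ ℝ ℝ) (0, 1) = (0 : ℝ × ℝ →ₗ[ℝ] ℝ) (0, 1) := by rw [h]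
      simp at this
    simp only [ae_eq_univ]
    exact le_antisymm ((measure_mono A).trans (le_of_eq B0)) bot_le
  have hg : Measurable fun p : ℝ × ℝ =>
      F (ell r p) * ENNReal.ofReal (r ^ 2 / 2 * (Real.cosh (2 * p.1) - Real.cos (2 * p.2))) := by
    apply (hF.comp (continuous_ell r).measurable).mul
    apply ENNReal.measurable_ofReal.comp
    fun_prop
  calc ∫⁻ x, F x = ∫⁻ x in ell r '' S, F x := by
        rw [setLIntegral_congr himg, setLIntegral_univ]
    _ = ∫⁻ p in S, ENNReal.ofReal |(B r p).det| * F (ell r p) :=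
        lintegral_image_eq_lintegral_abs_det_fderiv_mul volume hS
          (fun p _ => (hasFDerivAt_ell r p).hasFDerivWithinAt) (injOn r hr) F
    _ = ∫⁻ p in S, F (ell r p) *
          ENNReal.ofReal (r ^ 2 / 2 * (Real.cosh (2 * p.1) - Real.cos (2 * p.2))) := by
        refine lintegral_congr fun p => ?_
        rw [det_B, abs_of_nonneg (det_nonneg r p), mul_comm]
    _ = ∫⁻ μ in Set.Ioi (0:ℝ), ∫⁻ ν in Set.Ioo (0:ℝ) (2 * π),
          F (r * Real.cosh μ * Real.cos ν, r * Real.sinh μ * Real.sin ν) *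
          ENNReal.ofReal (r ^ 2 / 2 * (Real.cosh (2 * μ) - Real.cos (2 * ν))) := by
        rw [show S = Set.Ioi (0:ℝ) ×ˢ Set.Ioo (0:ℝ) (2 * π) from rfl,
          Measure.volume_eq_prod, ← Measure.prod_restrict,
          lintegral_prod _ hg.aemeasurable]
        rfl
end

section
/- Let f : [0, ∞) → [0, ∞] and k : [0, ∞) → [0, ∞] be measurable. Then ∫_{ℝ²} ∫_{ℝ²} f(‖x‖)·f(‖y‖)·k(‖x − y‖) dx dy = 8π · ∫₀^∞ ( ∫_{ℝ²} f(‖x + (r,0)‖)·f(‖x − (r,0)‖) dx ) · k(2r) · r dr. -/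
/-!
Substituting `x = w + y` and swapping the integrals turns the left side into
`∫ (∫ f(‖w + y‖) f(‖y‖) dy) k(‖w‖) dw`. Writing `w = 2a` and centring the inner integral at `-a`
gives the two-foci integral `∫ f(‖u + a‖) f(‖u - a‖) du`, which a reflection of the plane
exchanging `a` and `(‖a‖, 0)` shows to depend on `‖a‖` only. Polar coordinates in `a` finish,
the factor `8π = 4 · 2π` being the Jacobian of `w = 2a` times the length of the unit circle.
-/

open MeasureTheory

/-- The point `(r, 0)` of the Euclidean plane. -/
noncomputable def focalPoint (r : ℝ) : EuclideanSpace ℝ (Fin 2) :=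
  (EuclideanSpace.equiv (Fin 2) ℝ).symm ![r, 0]

open Set Metric Module ENNReal

section Convolution

variable {G : Type*} [AddCommGroup G] [MeasurableSpace G] [MeasurableAdd₂ G]
  (μ : Measure G) [SFinite μ] [μ.IsAddRightInvariant]

theorem lintegral_lintegral_mul_comp_sub {g g' h : G → ℝ≥0∞} (hg : Measurable g)
    (hg' : Measurable g') (hh : Measurable h) :
    ∫⁻ y, ∫⁻ x, g x * g' y * h (x - y) ∂μ ∂μ = ∫⁻ w, (∫⁻ y, g (w + y) * g' y ∂μ) * h w ∂μ :=
  calc ∫⁻ y, ∫⁻ x, g x * g' y * h (x - y) ∂μ ∂μ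
      = ∫⁻ y, ∫⁻ w, g (w + y) * g' y * h w ∂μ ∂μ := by
        refine lintegral_congr fun y ↦ ?_
        rw [← lintegral_add_right_eq_self _ y]
        simp only [add_sub_cancel_right]
    _ = ∫⁻ w, ∫⁻ y, g (w + y) * g' y * h w ∂μ ∂μ := lintegral_lintegral_swap (by fun_prop)
    _ = _ := lintegral_congr fun w ↦ lintegral_mul_const _ (by fun_prop)

end Convolution

section AddHaar

variable {E : Type*} [NormedAddCommGroup E] [NormedSpace ℝ E] [MeasurableSpace E] [BorelSpace E]
  [FiniteDimensional ℝ E] (μ : Measure E) [μ.IsAddHaarMeasure]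

theorem lintegral_fun_norm_addHaar [Nontrivial E] {f : ℝ → ℝ≥0∞} (hf : Measurable f) :
    ∫⁻ x, f ‖x‖ ∂μ = finrank ℝ E * μ (ball 0 1) *
      ∫⁻ y in Ioi (0 : ℝ), ENNReal.ofReal (y ^ (finrank ℝ E - 1)) * f y :=
  calc
    ∫⁻ x, f ‖x‖ ∂μ = ∫⁻ x : ({(0)}ᶜ : Set E), f ‖x.1‖ ∂(μ.comap (↑)) := by
      rw [lintegral_subtype_comap (measurableSet_singleton _).compl fun x ↦ f ‖x‖,
        restrict_compl_singleton]
    _ = ∫⁻ x, f x.2 ∂μ.toSphere.prod (.volumeIoiPow (finrank ℝ E - 1)) := by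
      simpa using μ.measurePreserving_homeomorphUnitSphereProd.lintegral_comp_emb
        (Homeomorph.measurableEmbedding _) (f ∘ Subtype.val ∘ Prod.snd)
    _ = μ.toSphere univ * ∫⁻ y : Ioi (0 : ℝ), f y ∂.volumeIoiPow (finrank ℝ E - 1) := by
      rw [lintegral_prod (fun x : sphere (0 : E) 1 × Ioi (0 : ℝ) ↦ f x.2)
        (hf.comp (measurable_subtype_coe.comp measurable_snd)).aemeasurable]
      simp only [lintegral_const, mul_comm]
    _ = _ := by
      rw [Measure.volumeIoiPow, lintegral_withDensity_eq_lintegral_mul _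
          (measurable_subtype_coe.pow_const _).ennreal_ofReal
          (show Measurable fun y : Ioi (0 : ℝ) ↦ f y from hf.comp measurable_subtype_coe),
        μ.toSphere_apply_univ]
      exact congrArg _ (lintegral_subtype_comap measurableSet_Ioi
        fun y ↦ ENNReal.ofReal (y ^ (finrank ℝ E - 1)) * f y)

theorem lintegral_comp_smul (f : E → ℝ≥0∞) {R : ℝ} (hR : R ≠ 0) :
    ∫⁻ x, f (R • x) ∂μ = ENNReal.ofReal |(R ^ finrank ℝ E)⁻¹| * ∫⁻ x, f x ∂μ := by
  rw [← smul_eq_mul, ← lintegral_smul_measure, ← Measure.map_addHaar_smul μ hR]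
  exact (lintegral_map_equiv f (Homeomorph.smul (Units.mk0 R hR)).toMeasurableEquiv).symm

end AddHaar

section Centring

variable {E : Type*} [NormedAddCommGroup E] [NormedSpace ℝ E] [MeasurableSpace E] [MeasurableAdd E]
  {μ : Measure E} [μ.IsAddRightInvariant]

theorem lintegral_two_smul_add_eq_lintegral_add_sub (F : ℝ → ℝ → ℝ≥0∞) (a : E) :
    ∫⁻ y, F ‖(2 : ℝ) • a + y‖ ‖y‖ ∂μ = ∫⁻ x, F ‖x + a‖ ‖x - a‖ ∂μ := by
  rw [← lintegral_add_right_eq_self _ (-a)]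
  congr! 4 <;> module

end Centring

section InnerProductSpace

variable {E : Type*} [NormedAddCommGroup E] [InnerProductSpace ℝ E] [FiniteDimensional ℝ E]
  [MeasurableSpace E] [BorelSpace E]

theorem lintegral_add_sub_eq_of_norm_eq (F : ℝ → ℝ → ℝ≥0∞) {a b : E} (h : ‖a‖ = ‖b‖) :
    ∫⁻ x, F ‖x + a‖ ‖x - a‖ = ∫⁻ x, F ‖x + b‖ ‖x - b‖ := by
  set T := Submodule.reflection (ℝ ∙ (b - a))ᗮ
  have hTb : T b = a := Submodule.reflection_sub h.symm
  rw [← T.measurePreserving.lintegral_comp_emb T.toMeasurableEquiv.measurableEmbedding]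
  refine lintegral_congr fun x ↦ ?_
  rw [← hTb, ← map_add, ← map_sub, T.norm_map, T.norm_map]

end InnerProductSpace

local notation "ℝ²" => EuclideanSpace ℝ (Fin 2)

theorem norm_focalPoint (r : ℝ) : ‖focalPoint r‖ = |r| := by
  simp [focalPoint, EuclideanSpace.norm_eq, Fin.sum_univ_two, Real.sqrt_sq_eq_abs]

theorem measurable_focalPoint : Measurable focalPoint := by
  unfold focalPoint
  fun_prop

theorem lintegral_fun_norm_euclideanSpace_fin_two {f : ℝ → ℝ≥0∞} (hf : Measurable f) :
    ∫⁻ x : ℝ², f ‖x‖ =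
      ENNReal.ofReal (2 * Real.pi) * ∫⁻ r in Ioi (0 : ℝ), f r * ENNReal.ofReal r := by
  rw [lintegral_fun_norm_addHaar volume hf, finrank_euclideanSpace_fin,
    EuclideanSpace.volume_ball_fin_two, ENNReal.ofReal_mul zero_le_two]
  simp only [ENNReal.ofReal_one, one_pow, one_mul, Nat.reduceSub, pow_one, ENNReal.ofReal_ofNat,
    Nat.cast_ofNat]
  simp_rw [mul_comm (ENNReal.ofReal _)]

theorem lintegral_two_smul_add_eq_lintegral_focalPoint (F : ℝ → ℝ → ℝ≥0∞) (a : ℝ²) :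
    ∫⁻ y : ℝ², F ‖(2 : ℝ) • a + y‖ ‖y‖ =
      ∫⁻ x : ℝ², F ‖x + focalPoint ‖a‖‖ ‖x - focalPoint ‖a‖‖ := by
  rw [lintegral_two_smul_add_eq_lintegral_add_sub]
  exact lintegral_add_sub_eq_of_norm_eq F (by rw [norm_focalPoint, abs_norm])

theorem measurable_lintegral_focalPoint {f : ℝ → ℝ≥0∞} (hf : Measurable f) :
    Measurable fun r ↦ ∫⁻ x : ℝ², f ‖x + focalPoint r‖ * f ‖x - focalPoint r‖ :=
  Measurable.lintegral_prod_right'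
    (f := fun p : ℝ × ℝ² ↦ f ‖p.2 + focalPoint p.1‖ * f ‖p.2 - focalPoint p.1‖)
    (by have := measurable_focalPoint; fun_prop)

/-- Reduction of the double spatial integral: for measurable `f, k : [0,∞) → [0,∞]`,
`∫_{ℝ²}∫_{ℝ²} f(‖x‖) f(‖y‖) k(‖x−y‖) dx dy
  = 8π ∫₀^∞ (∫_{ℝ²} f(‖x+(r,0)‖) f(‖x−(r,0)‖) dx) k(2r) r dr`. -/
theorem double_integral_reduction (f k : ℝ → ENNReal)
    (hf : Measurable f) (hk : Measurable k) :
    (∫⁻ y : EuclideanSpace ℝ (Fin 2), ∫⁻ x : EuclideanSpace ℝ (Fin 2),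
        f ‖x‖ * f ‖y‖ * k ‖x - y‖) =
      ENNReal.ofReal (8 * Real.pi) *
        ∫⁻ r in Set.Ioi (0:ℝ),
          (∫⁻ x : EuclideanSpace ℝ (Fin 2),
              f ‖x + focalPoint r‖ * f ‖x - focalPoint r‖) *
            k (2 * r) * ENNReal.ofReal r := by
  set G := fun r ↦ ∫⁻ x : ℝ², f ‖x + focalPoint r‖ * f ‖x - focalPoint r‖
  have hG : Measurable G := measurable_lintegral_focalPoint hf
  have h4 : ENNReal.ofReal |((2 : ℝ) ^ finrank ℝ ℝ²)⁻¹| = 4⁻¹ := by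
    rw [finrank_euclideanSpace_fin, abs_of_pos (by positivity), ENNReal.ofReal_inv_of_pos
      (by positivity)]
    norm_num
  calc (∫⁻ y : ℝ², ∫⁻ x : ℝ², f ‖x‖ * f ‖y‖ * k ‖x - y‖)
      = ∫⁻ w : ℝ², (∫⁻ y : ℝ², f ‖w + y‖ * f ‖y‖) * k ‖w‖ :=
        lintegral_lintegral_mul_comp_sub volume (hf.comp measurable_norm) (hf.comp measurable_norm)
          (hk.comp measurable_norm)
    _ = 4 * ∫⁻ a : ℝ², (∫⁻ y : ℝ², f ‖(2 : ℝ) • a + y‖ * f ‖y‖) * k ‖(2 : ℝ) • a‖ := by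
        rw [lintegral_comp_smul volume (fun w ↦ (∫⁻ y : ℝ², f ‖w + y‖ * f ‖y‖) * k ‖w‖)
          two_ne_zero, h4, ENNReal.mul_inv_cancel_left (by norm_num) (by norm_num)]
    _ = 4 * ∫⁻ a : ℝ², G ‖a‖ * k (2 * ‖a‖) := by
        congr 1
        refine lintegral_congr fun a ↦ ?_
        rw [lintegral_two_smul_add_eq_lintegral_focalPoint (fun s t ↦ f s * f t), norm_smul,
          Real.norm_two]
    _ = _ := by
        rw [lintegral_fun_norm_euclideanSpace_fin_two (f := fun r ↦ G r * k (2 * r)) (by fun_prop),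
          ← mul_assoc, ← ENNReal.ofReal_ofNat 4, ← ENNReal.ofReal_mul (by norm_num),
          show (4 : ℝ) * (2 * Real.pi) = 8 * Real.pi by ring]
end
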